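/- Fix n ≥ 2, let G be a graph, ω a placement function on G, and f : V(G) → V(C) satisfying (C1) and (C2). Let u_0,…,u_{k₁} and v_0,…,v_{k₂} be wrapping patterns in G. Suppose p₁ ∈ {1,…,k₁−1} and p₂ ∈ {1,…,k₂−1} are odd and f(u_{p₁}) = f(v_{p₂}) ≠ C(·,0). Then f(u_{p₁−1}) = f(v_{p₂−1}) and f(u_{p₁+1}) = f(v_{p₂+1}). -/

import Mathlib

/-- Vertices of the infinite n-od graph `C`: a branch vertex, and nodes `C(ℓ,j)`
(intended for `1 ≤ ℓ ≤ n`, `j ≥ 1`). -/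
inductive NOdVert : Type where
  | branch : NOdVert
  | node : ℕ → ℕ → NOdVert
deriving DecidableEq

/-- `cv ℓ j` denotes the vertex `C(ℓ,j)`, where `C(ℓ,0)` is the branch vertex. -/
def cv (ℓ j : ℕ) : NOdVert := if j = 0 then NOdVert.branch else NOdVert.node ℓ j

/-- Adjacency in the infinite n-od `C`: `C(ℓ,j)` is adjacent to `C(ℓ,j+1)` for
`1 ≤ ℓ ≤ n` and `j ≥ 0` (the case `j = 0` gives branch–`C(ℓ,1)` edges). -/
def nodAdj (n : ℕ) (u v : NOdVert) : Prop :=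
  ∃ ℓ j, 1 ≤ ℓ ∧ ℓ ≤ n ∧
    ((u = cv ℓ j ∧ v = cv ℓ (j + 1)) ∨ (v = cv ℓ j ∧ u = cv ℓ (j + 1)))

/-- The point `b(i,t) = ((1+t)cos(iπ/n), (1+t)sin(iπ/n))` in the plane. -/
noncomputable def bpt (n i : ℕ) (t : ℝ) : ℝ × ℝ :=
  ((1 + t) * Real.cos (i * Real.pi / n), (1 + t) * Real.sin (i * Real.pi / n))

/-- The origin `o` of the plane. -/
def origin : ℝ × ℝ := (0, 0)

/-- A placement function: on each edge of `G`, one endpoint maps to `o` and the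
other to some `b(i,t)` with `i ∈ {0,…,n}`, `t ∈ [0,1]`. -/
def IsPlacement {V : Type*} (n : ℕ) (G : SimpleGraph V) (ω : V → ℝ × ℝ) : Prop :=
  ∀ u v, G.Adj u v →
    (ω u = origin ∧ ∃ i ≤ n, ∃ t ∈ Set.Icc (0 : ℝ) 1, ω v = bpt n i t) ∨
    (ω v = origin ∧ ∃ i ≤ n, ∃ t ∈ Set.Icc (0 : ℝ) 1, ω u = bpt n i t)

/-- Condition (C1). -/
def CondC1 {V : Type*} (n : ℕ) (ω : V → ℝ × ℝ) (f : V → NOdVert) : Prop :=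
  ∀ u v, f u = f v →
    (ω u = origin ∧ ω v = origin) ∨
    ∃ i ≤ n, ∃ s ∈ Set.Icc (0 : ℝ) 1, ∃ t ∈ Set.Icc (0 : ℝ) 1,
      ω u = bpt n i s ∧ ω v = bpt n i t

/-- Condition (C2): `f` maps adjacent vertices of `G` to adjacent vertices of `C`. -/
def CondC2 {V : Type*} (n : ℕ) (G : SimpleGraph V) (f : V → NOdVert) : Prop :=
  ∀ u v, G.Adj u v → nodAdj n (f u) (f v)

/-- `w 0, …, w k` is a wrapping pattern in `G` for the placement function `ω`. -/
def IsWrapping {V : Type*} (n : ℕ) (G : SimpleGraph V) (ω : V → ℝ × ℝ)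
    (w : ℕ → V) (k : ℕ) : Prop :=
  0 < k ∧ 2 * (n + 1) ∣ k ∧
  (∀ p < k, G.Adj (w p) (w (p + 1))) ∧
  (∀ q, 2 * q ≤ k → ∃ t ∈ Set.Icc (0 : ℝ) 1, ω (w (2 * q)) = bpt n (q % (n + 1)) t) ∧
  (∀ q, 2 * q + 1 ≤ k → ω (w (2 * q + 1)) = origin)

/-- The branch-star of `C`: the branch vertex together with `C(ℓ,1)`, `1 ≤ ℓ ≤ n`. -/
def branchStar (n : ℕ) : Set NOdVert :=
  {NOdVert.branch} ∪ {x | ∃ ℓ, 1 ≤ ℓ ∧ ℓ ≤ n ∧ x = NOdVert.node ℓ 1}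

/-!
The vertex `X = f(u p₁) = f(v p₂)` is not the branch vertex, so it has only two neighbours
in `C`, and by (C2) the four vertices `f(u (p₁ ∓ 1))`, `f(v (p₂ ∓ 1))` are among them.
By (C1), two vertices with the same image under `f` are placed on the same ray `b(i, ·)`, and
position `2q` of a wrapping pattern is placed on ray `q mod (n + 1)`. Consecutive even positions
lie on different rays, so `f(u (p₁ - 1)) ≠ f(u (p₁ + 1))` and likewise for `v`; the only
alternative to the claim is then the swapped matching, which would give `q₁ ≡ q₂ + 1` and
`q₁ + 1 ≡ q₂` modulo `n + 1`, i.e. `n + 1 ∣ 2`, impossible for `n ≥ 2`.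
-/

open Real

theorem eq_of_polar_eq {r r' θ θ' : ℝ} (hr : 0 < r) (hr' : 0 < r')
    (hθ : θ ∈ Set.Ioc (-π) π) (hθ' : θ' ∈ Set.Ioc (-π) π)
    (hcos : r * cos θ = r' * cos θ') (hsin : r * sin θ = r' * sin θ') : θ = θ' := by
  have h : (r : ℂ) * (Complex.cos θ + Complex.sin θ * Complex.I) =
      r' * (Complex.cos θ' + Complex.sin θ' * Complex.I) := by
    apply Complex.ext <;> simp [← Complex.ofReal_cos, ← Complex.ofReal_sin, hcos, hsin]
  simpa [Complex.arg_mul_cos_add_sin_mul_I hr hθ, Complex.arg_mul_cos_add_sin_mul_I hr' hθ']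
    using congrArg Complex.arg h

theorem bpt_ne_origin {n i : ℕ} {t : ℝ} (ht : t ≠ -1) : bpt n i t ≠ origin := by
  intro h
  have hc : cos (i * π / n) = 0 := by
    simpa [bpt, origin, add_eq_zero_iff_eq_neg', ht] using congrArg Prod.fst h
  have hs : sin (i * π / n) = 0 := by
    simpa [bpt, origin, add_eq_zero_iff_eq_neg', ht] using congrArg Prod.snd h
  simpa [hc, hs] using sin_sq_add_cos_sq (i * π / n)

theorem angle_mem_Ioc_of_le {n i : ℕ} (hi : i ≤ n) : (i : ℝ) * π / n ∈ Set.Ioc (-π) π := by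
  rw [mul_div_right_comm]
  have hin : (i : ℝ) / n ≤ 1 := div_le_one_of_le₀ (by exact_mod_cast hi) n.cast_nonneg
  have hin0 : 0 ≤ (i : ℝ) / n := by positivity
  constructor <;> nlinarith [pi_pos]

theorem bpt_index_injective {n i i' : ℕ} (hi : i ≤ n) (hi' : i' ≤ n)
    {s t : ℝ} (hs : -1 < s) (ht : -1 < t) (h : bpt n i s = bpt n i' t) : i = i' := by
  rcases eq_or_ne n 0 with rfl | hn
  · omega
  have hθ : (i : ℝ) * π / n = i' * π / n :=
    eq_of_polar_eq (by linarith) (by linarith) (angle_mem_Ioc_of_le hi) (angle_mem_Ioc_of_le hi')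
      (congrArg Prod.fst h) (congrArg Prod.snd h)
  field_simp at hθ
  exact_mod_cast hθ

theorem CondC1.index_eq {V : Type*} {n : ℕ} {ω : V → ℝ × ℝ} {f : V → NOdVert}
    (h1 : CondC1 n ω f) {x y : V} (hxy : f x = f y) {i i' : ℕ} (hi : i ≤ n) (hi' : i' ≤ n)
    {s t : ℝ} (hs : -1 < s) (ht : -1 < t) (hx : ω x = bpt n i s) (hy : ω y = bpt n i' t) :
    i = i' := by
  rcases h1 x y hxy with ⟨hxo, -⟩ | ⟨j, hj, a, ha, b, hb, hxa, hyb⟩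
  · exact absurd (hx.symm.trans hxo) (bpt_ne_origin hs.ne')
  · have hij : i = j := bpt_index_injective hi hj hs (by linarith [ha.1]) (hx.symm.trans hxa)
    have hi'j : i' = j := bpt_index_injective hi' hj ht (by linarith [hb.1]) (hy.symm.trans hyb)
    rw [hij, hi'j]

theorem nodAdj_symm {n : ℕ} {X Y : NOdVert} (h : nodAdj n X Y) : nodAdj n Y X :=
  let ⟨ℓ, j, hℓ, hℓn, hXY⟩ := h
  ⟨ℓ, j, hℓ, hℓn, hXY.symm⟩

theorem eq_or_eq_of_nodAdj_node {n L J : ℕ} {Y : NOdVert} (h : nodAdj n (.node L J) Y) :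
    Y = cv L (J - 1) ∨ Y = .node L (J + 1) := by
  obtain ⟨ℓ, j, -, -, ⟨hX, hY⟩ | ⟨hY, hX⟩⟩ := h
  · rcases Nat.eq_zero_or_pos j with rfl | hj
    · simp [cv] at hX
    · simp only [cv, hj.ne', if_false, NOdVert.node.injEq] at hX
      simp [hY, cv, hX]
  · simp only [cv, Nat.add_one_ne_zero, if_false, NOdVert.node.injEq] at hX
    simp [hY, hX]

theorem eq_and_eq_of_mem_pair_of_not_swapped {α : Type*} {x y a a' b b' : α}
    (ha : a = x ∨ a = y) (ha' : a' = x ∨ a' = y) (hb : b = x ∨ b = y) (hb' : b' = x ∨ b' = y)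
    (haa' : a ≠ a') (hbb' : b ≠ b') (hswap : ¬(a = b' ∧ a' = b)) : a = b ∧ a' = b' := by
  rcases ha with rfl | rfl <;> rcases ha' with rfl | rfl <;> rcases hb with rfl | rfl <;>
    rcases hb' with rfl | rfl <;> simp_all

theorem Nat.not_modEq_add_of_pos_of_lt {m q d : ℕ} (hd : 0 < d) (hdm : d < m) :
    ¬q ≡ q + d [MOD m] := fun h => by
  have hmd : m ∣ d := Nat.modEq_zero_iff_dvd.mp (h.add_left_cancel' q).symm
  exact absurd (Nat.le_of_dvd hd hmd) (by omega)

namespace IsWrapping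

variable {V : Type*} {n : ℕ} {G : SimpleGraph V} {ω : V → ℝ × ℝ} {f : V → NOdVert}
  {u v : ℕ → V} {k₁ k₂ : ℕ}

theorem nodAdj_map_pred_and_succ (hu : IsWrapping n G ω u k₁) (h2 : CondC2 n G f) {p : ℕ}
    (hp : 1 ≤ p) (hpk : p + 1 ≤ k₁) :
    nodAdj n (f (u p)) (f (u (p - 1))) ∧ nodAdj n (f (u p)) (f (u (p + 1))) := by
  obtain ⟨-, -, hadj, -⟩ := hu
  have hpred := hadj (p - 1) (by omega)
  rw [Nat.sub_add_cancel hp] at hpred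
  exact ⟨nodAdj_symm (h2 _ _ hpred), h2 _ _ (hadj p (by omega))⟩

theorem modEq_of_map_eq (h1 : CondC1 n ω f) (hu : IsWrapping n G ω u k₁)
    (hv : IsWrapping n G ω v k₂) {q₁ q₂ : ℕ} (hq₁ : 2 * q₁ ≤ k₁) (hq₂ : 2 * q₂ ≤ k₂)
    (h : f (u (2 * q₁)) = f (v (2 * q₂))) : q₁ ≡ q₂ [MOD n + 1] := by
  obtain ⟨s, hs, hωu⟩ := hu.2.2.2.1 q₁ hq₁
  obtain ⟨t, ht, hωv⟩ := hv.2.2.2.1 q₂ hq₂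
  exact h1.index_eq h (Nat.lt_succ_iff.mp (Nat.mod_lt _ n.succ_pos))
    (Nat.lt_succ_iff.mp (Nat.mod_lt _ n.succ_pos)) (by linarith [hs.1]) (by linarith [ht.1]) hωu hωv

theorem map_pred_ne_map_succ (hn : n ≠ 0) (h1 : CondC1 n ω f) (hu : IsWrapping n G ω u k₁)
    {p : ℕ} (hp : p % 2 = 1) (hpk : p + 1 ≤ k₁) : f (u (p - 1)) ≠ f (u (p + 1)) := by
  obtain ⟨q, rfl⟩ : ∃ q, p = 2 * q + 1 := ⟨p / 2, by omega⟩
  intro h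
  rw [show 2 * q + 1 - 1 = 2 * q by omega, show 2 * q + 1 + 1 = 2 * (q + 1) by ring] at h
  exact Nat.not_modEq_add_of_pos_of_lt one_pos (by omega)
    (hu.modEq_of_map_eq h1 hu (by omega) (by omega) h)

theorem not_map_swapped (hn : 2 ≤ n) (h1 : CondC1 n ω f) (hu : IsWrapping n G ω u k₁)
    (hv : IsWrapping n G ω v k₂) {p₁ p₂ : ℕ} (hp₁ : p₁ % 2 = 1) (hp₂ : p₂ % 2 = 1)
    (hp₁k : p₁ + 1 ≤ k₁) (hp₂k : p₂ + 1 ≤ k₂) :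
    ¬(f (u (p₁ - 1)) = f (v (p₂ + 1)) ∧ f (u (p₁ + 1)) = f (v (p₂ - 1))) := by
  obtain ⟨q₁, rfl⟩ : ∃ q, p₁ = 2 * q + 1 := ⟨p₁ / 2, by omega⟩
  obtain ⟨q₂, rfl⟩ : ∃ q, p₂ = 2 * q + 1 := ⟨p₂ / 2, by omega⟩
  simp only [Nat.add_sub_cancel, show ∀ q, 2 * q + 1 + 1 = 2 * (q + 1) by intro; ring]
  rintro ⟨hlo, hhi⟩
  have hlo' := hu.modEq_of_map_eq h1 hv (by omega) (by omega) hlo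
  have hhi' := hu.modEq_of_map_eq h1 hv (by omega) (by omega) hhi
  exact Nat.not_modEq_add_of_pos_of_lt two_pos (by omega) (hhi'.symm.trans (hlo'.add_right 1))

end IsWrapping

theorem stmt8_general {V : Type*} (n : ℕ) (hn : 2 ≤ n) (G : SimpleGraph V)
    (ω : V → ℝ × ℝ)
    (f : V → NOdVert) (h1 : CondC1 n ω f) (h2 : CondC2 n G f)
    (u v : ℕ → V) (k₁ k₂ : ℕ)
    (hu : IsWrapping n G ω u k₁) (hv : IsWrapping n G ω v k₂)
    (p₁ p₂ : ℕ) (ho₁ : p₁ % 2 = 1) (ho₂ : p₂ % 2 = 1)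
    (hp₁ : 1 ≤ p₁) (hp₁k : p₁ + 1 ≤ k₁) (hp₂ : 1 ≤ p₂) (hp₂k : p₂ + 1 ≤ k₂)
    (heq : f (u p₁) = f (v p₂)) (hne : f (u p₁) ≠ NOdVert.branch) :
    f (u (p₁ - 1)) = f (v (p₂ - 1)) ∧ f (u (p₁ + 1)) = f (v (p₂ + 1)) := by
  obtain ⟨L, J, hX⟩ : ∃ L J, f (u p₁) = .node L J := by
    cases hX : f (u p₁) with
    | branch => exact absurd hX hne
    | node L J => exact ⟨L, J, rfl⟩
  obtain ⟨hu_pred, hu_succ⟩ := hu.nodAdj_map_pred_and_succ h2 hp₁ hp₁k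
  obtain ⟨hv_pred, hv_succ⟩ := hv.nodAdj_map_pred_and_succ h2 hp₂ hp₂k
  rw [hX] at hu_pred hu_succ
  rw [← heq, hX] at hv_pred hv_succ
  exact eq_and_eq_of_mem_pair_of_not_swapped
    (eq_or_eq_of_nodAdj_node hu_pred) (eq_or_eq_of_nodAdj_node hu_succ)
    (eq_or_eq_of_nodAdj_node hv_pred) (eq_or_eq_of_nodAdj_node hv_succ)
    (hu.map_pred_ne_map_succ (by omega) h1 ho₁ hp₁k) (hv.map_pred_ne_map_succ (by omega) h1 ho₂ hp₂k)
    (hu.not_map_swapped hn h1 hv ho₁ ho₂ hp₁k hp₂k)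

theorem stmt8 {V : Type*} (n : ℕ) (hn : 2 ≤ n) (G : SimpleGraph V)
    (ω : V → ℝ × ℝ) (hω : IsPlacement n G ω)
    (f : V → NOdVert) (h1 : CondC1 n ω f) (h2 : CondC2 n G f)
    (u v : ℕ → V) (k₁ k₂ : ℕ)
    (hu : IsWrapping n G ω u k₁) (hv : IsWrapping n G ω v k₂)
    (p₁ p₂ : ℕ) (ho₁ : p₁ % 2 = 1) (ho₂ : p₂ % 2 = 1)
    (hp₁ : 1 ≤ p₁) (hp₁k : p₁ + 1 ≤ k₁) (hp₂ : 1 ≤ p₂) (hp₂k : p₂ + 1 ≤ k₂)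
    (heq : f (u p₁) = f (v p₂)) (hne : f (u p₁) ≠ NOdVert.branch) :
    f (u (p₁ - 1)) = f (v (p₂ - 1)) ∧ f (u (p₁ + 1)) = f (v (p₂ + 1)) :=
  stmt8_general n hn G ω f h1 h2 u v k₁ k₂ hu hv p₁ p₂ ho₁ ho₂ hp₁ hp₁k hp₂ hp₂k heq hne
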